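/- Let r ≥ 2 be an integer. The functions ζ_1, ζ_2, …, ζ_{r−1} : ℂ → ℂ are linearly independent over ℂ. -/

import Mathlib

/-!
On the real line `θ_j` is the absolutely convergent Fourier series
`∑ₙ e^{-π(2rn² + 2jn)} e^{2πi(j + 2rn)x}`, so it descends to a continuous function on `ℝ/ℤ`
with spectrum in `j + 2rℤ`. For `0 < j, m < r` the frequency `m` occurs in `θ_j` only when
`j = m`, with coefficient `1`, and never in `θ_{-j}`. Hence the `m`-th Fourier coefficient
of `ζ_j` is nonzero exactly when `j = m`, and taking Fourier coefficients of a vanishing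
linear combination kills its coefficients one at a time.
-/

open Complex

/-- The theta function `θ_j(z) = Σ_{n ∈ ℤ} exp(−π(2rn² + 2jn) + 2πiz(j + 2rn))`. -/
noncomputable def theta (r : ℕ) (j : ℤ) (z : ℂ) : ℂ :=
  ∑' n : ℤ, Complex.exp (-(Real.pi : ℂ) * (2 * r * (n : ℂ) ^ 2 + 2 * j * n) +
    2 * (Real.pi : ℂ) * Complex.I * z * ((j : ℂ) + 2 * r * n))

/-- `ζ_j(z) = r^{1/4} e^{−πj²/(2r)} (θ_j(z) − θ_{−j}(z))`. -/
noncomputable def zeta (r : ℕ) (j : ℤ) (z : ℂ) : ℂ :=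
  (((r : ℝ) ^ ((1 : ℝ) / 4) : ℝ) : ℂ) *
    Complex.exp (-(Real.pi : ℂ) * (j : ℂ) ^ 2 / (2 * r)) * (theta r j z - theta r (-j) z)

/-- The quantized integer `[n] = sin(nπ/r)/sin(π/r)`. -/
noncomputable def qint (r : ℕ) (n : ℤ) : ℝ :=
  Real.sin (n * Real.pi / r) / Real.sin (Real.pi / r)

open MeasureTheory AddCircle
open scoped Real

section FourierCoeff

variable {T : ℝ} {ι : Type*}

theorem continuous_tsum_mul_fourier {a : ι → ℂ} (ha : Summable (‖a ·‖)) (k : ι → ℤ) :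
    Continuous fun t : AddCircle T => ∑' i, a i * fourier (k i) t :=
  continuous_tsum (fun i => continuous_const.mul (fourier (k i)).continuous) ha
    fun i t => by simp [Circle.norm_coe]

variable [Fact (0 < T)]

theorem fourierCoeff_sub {f g : AddCircle T → ℂ} (hf : Integrable f haarAddCircle)
    (hg : Integrable g haarAddCircle) (n : ℤ) :
    fourierCoeff (f - g) n = fourierCoeff f n - fourierCoeff g n := by
  simpa [fourierCoeff, -fourier_apply, mul_sub] using
    integral_sub (hf.fourier_smul (-n)) (hg.fourier_smul (-n))

theorem fourierCoeff_tsum_mul_fourier [Countable ι] {a : ι → ℂ} (ha : Summable (‖a ·‖))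
    (k : ι → ℤ) (m : ℤ) :
    fourierCoeff (fun t : AddCircle T => ∑' i, a i * fourier (k i) t) m =
      ∑' i, if k i = m then a i else 0 := by
  have hterm (i : ι) : fourierCoeff (fun t : AddCircle T => a i * fourier (k i) t) m =
      if k i = m then a i else 0 := by
    rw [fourierCoeff.const_mul, fourierCoeff_fourier, Pi.single_apply]
    split_ifs <;> simp_all [eq_comm]
  have hint (i : ι) : Integrable (fun t : AddCircle T => a i * fourier (k i) t) haarAddCircle :=
    (continuous_const.mul (fourier (k i)).continuous).integrable_of_hasCompactSupport
      (HasCompactSupport.of_compactSpace _)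
  simp_rw [← hterm, fourierCoeff, smul_eq_mul, ← tsum_mul_left]
  refine (integral_tsum_of_summable_integral_norm (fun i => (hint i).fourier_smul (-m)) ?_).symm
  simpa [Circle.norm_coe] using ha

theorem linearIndependent_of_fourierCoeff {f : ι → AddCircle T → ℂ}
    (hf : ∀ i, Integrable (f i) haarAddCircle) (k : ι → ℤ)
    (hdiag : ∀ i, fourierCoeff (f i) (k i) ≠ 0)
    (hoff : ∀ i j, i ≠ j → fourierCoeff (f j) (k i) = 0) : LinearIndependent ℂ f := by
  classical
  refine linearIndependent_iff'.mpr fun s g hsum i hi => ?_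
  have hcoeff := congr_fun (congr_arg fourierCoeff hsum) (k i)
  have hoff' (j : ι) (hji : j ≠ i) : fourierCoeff (g j • f j) (k i) = 0 := by
    rw [fourierCoeff.const_smul, hoff i j hji.symm, smul_zero]
  rw [fourierCoeff.sum s _ fun j _ => (hf j).smul (g j), Finset.sum_apply,
    Finset.sum_eq_single_of_mem i hi fun j _ => hoff' j, fourierCoeff.const_smul,
    smul_eq_mul] at hcoeff
  have hzero : fourierCoeff (0 : AddCircle T → ℂ) (k i) = 0 := by simp [fourierCoeff]
  exact (mul_eq_zero.mp (hcoeff.trans hzero)).resolve_right (hdiag i)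

end FourierCoeff

theorem eq_of_add_two_mul_mul_eq {r j m n : ℤ} (hj : |j| < r) (hm : |m| < r)
    (h : j + 2 * r * n = m) : n = 0 ∧ j = m := by
  rw [abs_lt] at hj hm
  have hn : n = 0 := by
    rcases lt_trichotomy n 0 with hn | hn | hn
    · nlinarith
    · exact hn
    · nlinarith
  subst hn
  simpa using h

noncomputable def thetaCoeff (r : ℕ) (j n : ℤ) : ℂ :=
  exp (-π * (2 * r * n ^ 2 + 2 * j * n))

noncomputable def thetaCircle (r : ℕ) (j : ℤ) (t : AddCircle (1 : ℝ)) : ℂ :=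
  ∑' n : ℤ, thetaCoeff r j n * fourier (j + 2 * r * n) t

noncomputable def zetaCircle (r : ℕ) (j : ℤ) (t : AddCircle (1 : ℝ)) : ℂ :=
  (((r : ℝ) ^ ((1 : ℝ) / 4) : ℝ) : ℂ) *
    exp (-π * (j : ℂ) ^ 2 / (2 * r)) * (thetaCircle r j t - thetaCircle r (-j) t)

theorem theta_ofReal (r : ℕ) (j : ℤ) (x : ℝ) : theta r j x = thetaCircle r j x := by
  refine tsum_congr fun n => ?_
  rw [thetaCoeff, fourier_coe_apply, ← exp_add]
  push_cast
  ring_nf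

theorem zeta_ofReal (r : ℕ) (j : ℤ) (x : ℝ) : zeta r j x = zetaCircle r j x := by
  rw [zeta, zetaCircle, theta_ofReal, theta_ofReal]

theorem summable_norm_thetaCoeff {r : ℕ} (hr : 0 < r) (j : ℤ) :
    Summable fun n => ‖thetaCoeff r j n‖ := by
  have hterm (n : ℤ) : thetaCoeff r j n = jacobiTheta₂_term n (j * I) (2 * r * I) := by
    rw [thetaCoeff, jacobiTheta₂_term]
    ring_nf
    simp [I_sq]
    ring_nf
  simp_rw [hterm]
  exact ((summable_jacobiTheta₂_term_iff _ _).mpr (by simpa using hr)).norm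

theorem integrable_thetaCircle {r : ℕ} (hr : 0 < r) (j : ℤ) :
    Integrable (thetaCircle r j) haarAddCircle :=
  (continuous_tsum_mul_fourier (summable_norm_thetaCoeff hr j) _).integrable_of_hasCompactSupport
    (HasCompactSupport.of_compactSpace _)

theorem integrable_zetaCircle {r : ℕ} (hr : 0 < r) (j : ℤ) :
    Integrable (zetaCircle r j) haarAddCircle :=
  ((integrable_thetaCircle hr j).sub (integrable_thetaCircle hr (-j))).const_mul _

theorem fourierCoeff_thetaCircle {r : ℕ} {j m : ℤ} (hj : |j| < r) (hm : |m| < r) :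
    fourierCoeff (thetaCircle r j) m = if j = m then 1 else 0 := by
  have hr : 0 < r := by exact_mod_cast (abs_nonneg j).trans_lt hj
  unfold thetaCircle
  rw [fourierCoeff_tsum_mul_fourier (summable_norm_thetaCoeff hr j)]
  split_ifs with hjm
  · rw [tsum_eq_single 0 fun n hn => if_neg fun h => hn (eq_of_add_two_mul_mul_eq hj hm h).1]
    simp [thetaCoeff, hjm]
  · refine (tsum_congr fun n => ?_).trans tsum_zero
    exact if_neg fun h => hjm (eq_of_add_two_mul_mul_eq hj hm h).2

theorem fourierCoeff_zetaCircle {r : ℕ} {j m : ℤ} (hj : 0 < j) (hjr : j < r) (hm : 0 < m)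
    (hmr : m < r) :
    fourierCoeff (zetaCircle r j) m = (((r : ℝ) ^ ((1 : ℝ) / 4) : ℝ) : ℂ) *
      exp (-π * (j : ℂ) ^ 2 / (2 * r)) * if j = m then 1 else 0 := by
  have hr : 0 < r := by omega
  have habs : |j| < r ∧ |-j| < r ∧ |m| < r := by simp only [abs_neg, abs_lt]; omega
  unfold zetaCircle
  rw [fourierCoeff.const_mul, ← Pi.sub_def,
    fourierCoeff_sub (integrable_thetaCircle hr j) (integrable_thetaCircle hr (-j)),
    fourierCoeff_thetaCircle habs.1 habs.2.2, fourierCoeff_thetaCircle habs.2.1 habs.2.2,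
    if_neg (show -j ≠ m by omega), sub_zero]

theorem zeta_linearIndependent_general (r : ℕ) :
    LinearIndependent ℂ (fun j : Fin (r - 1) => zeta r ((j : ℤ) + 1)) := by
  have hbounds (j : Fin (r - 1)) : 0 < (j : ℤ) + 1 ∧ (j : ℤ) + 1 < r := by omega
  have hcircle : LinearIndependent ℂ fun j : Fin (r - 1) => zetaCircle r ((j : ℤ) + 1) := by
    refine linearIndependent_of_fourierCoeff
      (fun j => integrable_zetaCircle (by have := (hbounds j).2; omega) _) (fun i => (i : ℤ) + 1)
      (fun i => ?_) fun i j hij => ?_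
    · rw [fourierCoeff_zetaCircle (hbounds i).1 (hbounds i).2 (hbounds i).1 (hbounds i).2,
        if_pos rfl, mul_one]
      have : (r : ℝ) ≠ 0 := Nat.cast_ne_zero.mpr (by have := (hbounds i).2; omega)
      simp [this]
    · rw [fourierCoeff_zetaCircle (hbounds j).1 (hbounds j).2 (hbounds i).1 (hbounds i).2,
        if_neg (by omega), mul_zero]
  have hrestrict : LinearMap.funLeft ℂ ℂ ((↑) : ℝ → ℂ) ∘
        (fun j : Fin (r - 1) => zeta r ((j : ℤ) + 1)) =
      LinearMap.funLeft ℂ ℂ ((↑) : ℝ → AddCircle (1 : ℝ)) ∘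
        fun j : Fin (r - 1) => zetaCircle r ((j : ℤ) + 1) := by
    ext j x
    exact zeta_ofReal r _ x
  refine .of_comp (LinearMap.funLeft ℂ ℂ ((↑) : ℝ → ℂ)) ?_
  rw [hrestrict]
  exact hcircle.map' _ (LinearMap.ker_eq_bot.mpr
    (LinearMap.funLeft_injective_of_surjective _ _ _ QuotientAddGroup.mk_surjective))

/-- The functions `ζ_1, …, ζ_{r−1} : ℂ → ℂ` are linearly independent over `ℂ`. -/
theorem zeta_linearIndependent (r : ℕ) (hr : 2 ≤ r) :
    LinearIndependent ℂ (fun j : Fin (r - 1) => zeta r ((j : ℤ) + 1)) :=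
  zeta_linearIndependent_general r
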